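/- Let G be a group with finite symmetric generating set S whose word metric d_S is δ-hyperbolic (δ ≥ 0), let d be a natural number with d ≥ 32δ + 20, and let H be a finite subgroup of G. Suppose y₀, x₀, y₀' ∈ G satisfy: d/2 < d(Hy₀) ≤ d, d_S(x₀, y₀) = d(Hy₀, {x₀}) (y₀ is a point of its orbit farthest from x₀), y₀' lies on a geodesic from x₀ to y₀ (i.e., d_S(x₀, y₀') + d_S(y₀', y₀) = d_S(x₀, y₀)), and d_S(y₀', y₀) = ⌊d/4⌋. Then d(Hy₀') ≤ d, i.e., d_S(h y₀', h' y₀') ≤ d for all h, h' ∈ H. -/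
import Mathlib


/-- The word metric on a group `G` with respect to a generating set `S`:
`wordDist S x y` is the least `n` such that `x⁻¹ * y` is a product of `n` elements of `S`. -/
noncomputable def wordDist {G : Type*} [Group G] (S : Set G) (x y : G) : ℕ :=
  sInf {n : ℕ | ∃ l : List G, (∀ s ∈ l, s ∈ S) ∧ l.length = n ∧ x⁻¹ * y = l.prod}

/-- A distance function `d` on `X` is `δ`-hyperbolic if for all `x,y,z,t` one has
`d x y + d z t ≤ max (d x z + d y t) (d x t + d y z) + 2δ`. -/
def IsHyperbolicDist {X : Type*} (d : X → X → ℝ) (δ : ℝ) : Prop :=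
  ∀ x y z t : X, d x y + d z t ≤ max (d x z + d y t) (d x t + d y z) + 2 * δ

/-- The orbit `Hx = {h * x : h ∈ H}` of a point `x` under a subgroup `H`. -/
def orb {G : Type*} [Group G] (H : Subgroup G) (x : G) : Set G :=
  (fun h => h * x) '' (H : Set G)

/-- `setD S K L = max_{k ∈ K, l ∈ L} d_S(k,l)`, the maximal word-metric distance between
the (finite) sets `K` and `L`.  `setD S K K` is the diameter of `K`. -/
noncomputable def setD {G : Type*} [Group G] (S : Set G) (K L : Set G) : ℕ :=
  sSup {n : ℕ | ∃ k ∈ K, ∃ l ∈ L, wordDist S k l = n}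

lemma wordDist_mul_left {G : Type*} [Group G] (S : Set G) (g x y : G) :
    wordDist S (g * x) (g * y) = wordDist S x y := by
  unfold wordDist
  simp only [show (g * x)⁻¹ * (g * y) = x⁻¹ * y by group]

lemma wordDist_symm {G : Type*} [Group G] {S : Set G} (hsymm : S⁻¹ = S) (x y : G) :
    wordDist S x y = wordDist S y x := by
  have key : ∀ a b : G, ∀ n, (∃ l : List G, (∀ s ∈ l, s ∈ S) ∧ l.length = n ∧ a⁻¹ * b = l.prod) →
      (∃ l : List G, (∀ s ∈ l, s ∈ S) ∧ l.length = n ∧ b⁻¹ * a = l.prod) := by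
    rintro a b n ⟨l, hlS, hlen, hprod⟩
    refine ⟨(l.map fun x => x⁻¹).reverse, ?_, by simp [hlen], ?_⟩
    · intro s hs
      simp only [List.mem_reverse, List.mem_map] at hs
      obtain ⟨t, ht, rfl⟩ := hs
      rw [← hsymm]
      simpa using hlS t ht
    · rw [← List.prod_inv_reverse, ← hprod]
      group
  unfold wordDist
  congr 1
  ext n
  exact ⟨key x y n, key y x n⟩

/-- Case (b) of the well-definedness of the contraction map: if `d/2 < d(Hy₀) ≤ d`,
`y₀` is a point of its orbit farthest from `x₀`, and `y₀'` lies on a geodesic from `x₀`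
to `y₀` at distance `⌊d/4⌋` from `y₀`, then the orbit of `y₀'` has diameter at most `d`. -/
theorem moved_orbit_small_diameter
    {G : Type*} [Group G] (S : Set G) (hfin : S.Finite) (hsymm : S⁻¹ = S)
    (hone : (1 : G) ∉ S) (hgen : Subgroup.closure S = ⊤)
    (δ : ℝ) (hδ : 0 ≤ δ)
    (hhyp : IsHyperbolicDist (fun x y => (wordDist S x y : ℝ)) δ)
    (d : ℕ) (hd : (d : ℝ) ≥ 32 * δ + 20)
    (H : Subgroup G) (hH : ((H : Subgroup G) : Set G).Finite)
    (y₀ x₀ y₀' : G)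
    (horb_lb : (d : ℝ) / 2 < (setD S (orb H y₀) (orb H y₀) : ℝ))
    (horb_ub : setD S (orb H y₀) (orb H y₀) ≤ d)
    (hfar : wordDist S x₀ y₀ = setD S (orb H y₀) {x₀})
    (hgeod : wordDist S x₀ y₀' + wordDist S y₀' y₀ = wordDist S x₀ y₀)
    (hquarter : wordDist S y₀' y₀ = d / 4) :
    setD S (orb H y₀') (orb H y₀') ≤ d := by
  have horbfin : (orb H y₀).Finite := hH.image _
  -- boundedness of the two index sets
  have hbdd1 : BddAbove {n : ℕ | ∃ k ∈ orb H y₀, ∃ l ∈ ({x₀} : Set G), wordDist S k l = n} := by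
    refine (horbfin.image (fun k => wordDist S k x₀)).bddAbove.mono ?_
    rintro n ⟨k, hk, l, hl, rfl⟩
    rcases hl with rfl
    exact ⟨k, hk, rfl⟩
  have hbdd2 : BddAbove {n : ℕ | ∃ k ∈ orb H y₀, ∃ l ∈ orb H y₀, wordDist S k l = n} := by
    refine (Set.Finite.image2 (wordDist S) horbfin horbfin).bddAbove.mono ?_
    rintro n ⟨k, hk, l, hl, rfl⟩
    exact ⟨k, hk, l, hl, rfl⟩
  -- the key estimate: for any g ∈ H, the real word distance from y₀' to g•y₀' is ≤ d
  have key : ∀ g : G, g ∈ (H : Set G) → (wordDist S y₀' (g * y₀') : ℝ) ≤ d := by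
    intro g hg
    have hgy₀ : g * y₀ ∈ orb H y₀ := ⟨g, hg, rfl⟩
    have hy₀mem : y₀ ∈ orb H y₀ := ⟨1, one_mem _, by simp⟩
    have hginvy₀ : g⁻¹ * y₀ ∈ orb H y₀ := ⟨g⁻¹, inv_mem hg, rfl⟩
    -- basic facts
    have f1 : (wordDist S x₀ y₀' : ℝ) + (wordDist S y₀' y₀ : ℝ) = (wordDist S x₀ y₀ : ℝ) := by
      exact_mod_cast congrArg (Nat.cast : ℕ → ℝ) hgeod
    have f2 : (wordDist S x₀ (g * y₀) : ℝ) ≤ (wordDist S x₀ y₀ : ℝ) := by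
      have mem : wordDist S (g * y₀) x₀ ∈
          {n : ℕ | ∃ k ∈ orb H y₀, ∃ l ∈ ({x₀} : Set G), wordDist S k l = n} :=
        ⟨g * y₀, hgy₀, x₀, rfl, rfl⟩
      have h := le_csSup hbdd1 mem
      rw [wordDist_symm hsymm] at h
      rw [hfar]
      exact_mod_cast h
    have f3 : (wordDist S (g * x₀) y₀ : ℝ) ≤ (wordDist S x₀ y₀ : ℝ) := by
      have e : wordDist S (g * x₀) y₀ = wordDist S x₀ (g⁻¹ * y₀) := by
        rw [← wordDist_mul_left S g⁻¹ (g * x₀) y₀]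
        simp [mul_assoc]
      have mem : wordDist S (g⁻¹ * y₀) x₀ ∈
          {n : ℕ | ∃ k ∈ orb H y₀, ∃ l ∈ ({x₀} : Set G), wordDist S k l = n} :=
        ⟨g⁻¹ * y₀, hginvy₀, x₀, rfl, rfl⟩
      have h := le_csSup hbdd1 mem
      rw [wordDist_symm hsymm] at h
      rw [e, hfar]
      exact_mod_cast h
    have f4 : (wordDist S y₀ (g * y₀) : ℝ) ≤ (d : ℝ) := by
      have mem : wordDist S y₀ (g * y₀) ∈
          {n : ℕ | ∃ k ∈ orb H y₀, ∃ l ∈ orb H y₀, wordDist S k l = n} :=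
        ⟨y₀, hy₀mem, g * y₀, hgy₀, rfl⟩
      have h := (le_csSup hbdd2 mem).trans horb_ub
      exact_mod_cast h
    have hk4 : 4 * (wordDist S y₀' y₀) ≤ d ∧ d ≤ 4 * (wordDist S y₀' y₀) + 3 := by omega
    have fk1 : 4 * (wordDist S y₀' y₀ : ℝ) ≤ (d : ℝ) := by exact_mod_cast hk4.1
    have fk2 : (d : ℝ) ≤ 4 * (wordDist S y₀' y₀ : ℝ) + 3 := by exact_mod_cast hk4.2
    have hm0 : (0:ℝ) ≤ (wordDist S y₀ (g * y₀) : ℝ) := Nat.cast_nonneg _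
    have hk0 : (0:ℝ) ≤ (wordDist S y₀' y₀ : ℝ) := Nat.cast_nonneg _
    -- translated distances
    have t1 : (wordDist S (g * x₀) (g * y₀) : ℝ) = (wordDist S x₀ y₀ : ℝ) := by
      rw [wordDist_mul_left]
    have t2 : (wordDist S (g * x₀) (g * y₀') : ℝ) = (wordDist S x₀ y₀' : ℝ) := by
      rw [wordDist_mul_left]
    have t3 : (wordDist S (g * y₀') (g * y₀) : ℝ) = (wordDist S y₀' y₀ : ℝ) := by
      rw [wordDist_mul_left]
    -- Step 1 : four-point with (y₀', g y₀, x₀, y₀)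
    have s1 := hhyp y₀' (g * y₀) x₀ y₀
    simp only at s1
    rw [wordDist_symm hsymm y₀' x₀, wordDist_symm hsymm (g*y₀) y₀,
        wordDist_symm hsymm (g*y₀) x₀] at s1
    -- Step 2 : four-point with (g y₀', y₀, g x₀, g y₀)
    have s2 := hhyp (g * y₀') y₀ (g * x₀) (g * y₀)
    simp only at s2
    rw [wordDist_symm hsymm (g*y₀') (g*x₀), wordDist_symm hsymm y₀ (g*x₀), t1, t2, t3] at s2
    -- Step 3 : four-point with (y₀', g y₀', y₀, g y₀)
    have s3 := hhyp y₀' (g * y₀') y₀ (g * y₀)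
    simp only at s3
    rw [t3] at s3
    rcases max_choice ((wordDist S x₀ y₀' : ℝ) + (wordDist S y₀ (g * y₀) : ℝ))
        ((wordDist S y₀' y₀ : ℝ) + (wordDist S x₀ (g * y₀) : ℝ)) with h1 | h1 <;> rw [h1] at s1 <;>
    rcases max_choice ((wordDist S x₀ y₀' : ℝ) + (wordDist S y₀ (g * y₀) : ℝ))
        ((wordDist S y₀' y₀ : ℝ) + (wordDist S (g * x₀) y₀ : ℝ)) with h2 | h2 <;> rw [h2] at s2 <;>
    rcases max_choice ((wordDist S y₀' y₀ : ℝ) + (wordDist S y₀' y₀ : ℝ))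
        ((wordDist S y₀' (g * y₀) : ℝ) + (wordDist S (g * y₀') y₀ : ℝ)) with h3 | h3 <;>
      rw [h3] at s3 <;> linarith
  -- conclude
  refine csSup_le' ?_
  rintro n ⟨a, ⟨h1, hh1, rfl⟩, b, ⟨h2, hh2, rfl⟩, rfl⟩
  have e : wordDist S (h1 * y₀') (h2 * y₀') = wordDist S y₀' ((h1⁻¹ * h2) * y₀') := by
    rw [← wordDist_mul_left S h1⁻¹]
    simp [mul_assoc]
  rw [e]
  have := key (h1⁻¹ * h2) (mul_mem (inv_mem hh1) hh2)
  exact_mod_cast this
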